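/- Let E be a real Banach space, D ⊆ E* a weak*-compact convex set with 0 ∉ D, and B ⊆ E* a set such that for every x ∈ L_D there is b* ∈ B with ⟨x,b*⟩ = sup{⟨x,z*⟩ : z* ∈ B}. If B ⊆ ∪_{n=1}^∞ K_n for some sequence (K_n) of weak*-compact convex subsets of the weak*-closed convex hull of B, then the weak*-closed convex hull of B is contained in the norm closure of co(∪_{n=1}^∞ K_n) + Λ_D. -/

import Mathlib

/-!
Suppose `w` lies in the weak*-closed convex hull of `B` but at norm distance `> ε` from
`co(⋃ Kₙ) + Λ_D`. The convex hull `Pₙ` of finitely many `Kᵢ` is weak*-compact, and `Λ_D` is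
weak*-closed because the weak*-compact set `D` lies in a half-space `{d | d e ≤ r}`, `r < 0`.
Separating `w` from `Pₙ + ε • ball + Λ_D` gives unit vectors `xₙ` with `p xₙ + ε ≤ w xₙ` on `Pₙ`
and `D ≤ 0` at `xₙ`. For small `θ > 0` the closed convex hull of `vₙ = xₙ + θ • e` lies in `L_D`,
so every point of it attains its supremum over `B`, while for each `b ∈ B ⊆ ⋃ Kₙ` the values
`(b - w) vₙ` are eventually `≤ -ε / 2`. Simons' inequality then yields a point of that hull at
which `sup_{b ∈ B} (b - w) ≤ -ε / 2`, although `w ≤ sup_B` everywhere.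
-/

open Filter Topology Pointwise

/-- `L_D`: for nonempty `D`, the set of `x ∈ E` with `sup_{d* ∈ D} ⟨x, d*⟩ < 0`;
for `D = ∅`, the set `E \ {0}`. -/
def LD {E : Type*} [NormedAddCommGroup E] [NormedSpace ℝ E]
    (D : Set (StrongDual ℝ E)) : Set E :=
  {x | (D = ∅ ∧ x ≠ 0) ∨ (D.Nonempty ∧ ∃ r < (0 : ℝ), ∀ d ∈ D, d x ≤ r)}

/-- `Λ_D = {0} ∪ {λ d* : λ > 0, d* ∈ D}`, the cone generated by `D`. -/
def LambdaD {E : Type*} [NormedAddCommGroup E] [NormedSpace ℝ E]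
    (D : Set (StrongDual ℝ E)) : Set (StrongDual ℝ E) :=
  {0} ∪ {z | ∃ l : ℝ, 0 < l ∧ ∃ d ∈ D, z = l • d}

/-- The weak*-closed convex hull of a subset of the dual space. -/
def wStarClosedConvexHull {E : Type*} [NormedAddCommGroup E] [NormedSpace ℝ E]
    (B : Set (StrongDual ℝ E)) : Set (StrongDual ℝ E) :=
  StrongDual.toWeakDual ⁻¹'
    (closure (StrongDual.toWeakDual '' (convexHull ℝ B)))

open Set

theorem exists_seq_forall_partialSum {α β : Type*} [AddCommMonoid β] (f : ℕ → α → β)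
    (P : ℕ → β → α → Prop) (h : ∀ k s, ∃ x, P k s x) :
    ∃ x : ℕ → α, ∀ k, P k (∑ j ∈ Finset.range k, f j (x j)) (x k) := by
  choose g hg using h
  let S : ℕ → β := fun k => Nat.rec 0 (fun k s => s + f k (g k s)) k
  have hS : ∀ k, S k = ∑ j ∈ Finset.range k, f j (g j (S j)) := by
    intro k
    induction k with
    | zero => rfl
    | succ k ih => rw [Finset.sum_range_succ, ← ih]
  exact ⟨fun k => g k (S k), fun k => hS k ▸ hg k (S k)⟩

theorem Set.Nonempty.exists_le_add_of_bddBelow {α : Type*} {s : Set α} (hs : s.Nonempty)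
    {f : α → ℝ} (hf : BddBelow (f '' s)) {η : ℝ} (hη : 0 < η) :
    ∃ x ∈ s, ∀ y ∈ s, f x ≤ f y + η := by
  obtain ⟨_, ⟨x, hx, rfl⟩, hlt⟩ :=
    exists_lt_of_csInf_lt (hs.image f) (lt_add_of_pos_right (sInf (f '' s)) hη)
  exact ⟨x, hx, fun y hy => by linarith [csInf_le hf (mem_image_of_mem f hy)]⟩

theorem le_add_of_forall_le_succ_add {t : ℕ → ℝ} {ρ : ℝ} (hρ : 0 ≤ ρ)
    (h : ∀ k, t k ≤ t (k + 1) + ρ * (1 / 2) ^ (k + 1)) (m : ℕ) : t 0 ≤ t m + ρ := by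
  have key : ∀ m, t 0 ≤ t m + ρ * (1 - (1 / 2) ^ m) := by
    intro m
    induction m with
    | zero => simp
    | succ m ih => linarith [h m, show ρ * (1 / 2 : ℝ) ^ (m + 1) = ρ * (1 / 2) ^ m / 2 by ring]
  linarith [key m, mul_nonneg hρ (pow_nonneg (by norm_num : (0 : ℝ) ≤ 1 / 2) m)]

theorem hasSum_half_pow_succ : HasSum (fun j : ℕ => (1 / 2 : ℝ) ^ (j + 1)) 1 := by
  simpa [pow_succ] using hasSum_geometric_two.mul_right (1 / 2 : ℝ)

theorem IsClosed.mem_of_hasSum_smul {X : Type*} [TopologicalSpace X] [AddCommGroup X]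
    [Module ℝ X] [ContinuousSMul ℝ X] {V : Set X} (hVcl : IsClosed V) (hV : Convex ℝ V)
    {a : ℕ → ℝ} {u : ℕ → X} {x : X} (ha : ∀ j, 0 ≤ a j) (ha1 : HasSum a 1) (hu : ∀ j, u j ∈ V)
    (hx : HasSum (fun j => a j • u j) x) : x ∈ V := by
  have hlim : Tendsto (fun m => (Finset.range m).centerMass a u) atTop (𝓝 x) := by
    simpa [Finset.centerMass] using ha1.tendsto_sum_nat.inv₀ one_ne_zero |>.smul hx.tendsto_sum_nat
  refine hVcl.mem_of_tendsto hlim ?_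
  filter_upwards [ha1.tendsto_sum_nat.eventually (lt_mem_nhds one_pos)] with m hm
  exact hV.centerMass_mem (fun j _ => ha j) hm (fun j _ => hu j)

theorem ContinuousLinearMap.apply_le_of_mem_closure_convexHull {X : Type*} [TopologicalSpace X]
    [AddCommGroup X] [Module ℝ X] (f : X →L[ℝ] ℝ) {s : Set X} {c : ℝ} (h : ∀ x ∈ s, f x ≤ c)
    {x : X} (hx : x ∈ closure (convexHull ℝ s)) : f x ≤ c :=
  closure_minimal (convexHull_min h (convex_halfSpace_le f.toLinearMap.isLinear c))
    (isClosed_le f.continuous continuous_const) hx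

theorem ConvexCone.convex_insert_zero {X : Type*} [AddCommGroup X] [Module ℝ X]
    (C : ConvexCone ℝ X) : Convex ℝ (insert 0 (C : Set X)) := by
  have hseg : ∀ x ∈ C, ∀ b : ℝ, 0 ≤ b → b • x ∈ insert 0 (C : Set X) := fun x hx b hb =>
    hb.eq_or_lt.elim (fun h => Or.inl (by simp [← h])) fun h => Or.inr (C.smul_mem h hx)
  rintro x (rfl | hx) y (rfl | hy) a b ha hb hab
  · simp
  · simpa using hseg y hy b hb
  · simpa using hseg x hx a ha
  · rcases ha.eq_or_lt with rfl | ha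
    · simpa using hseg y hy b hb
    rcases hb.eq_or_lt with rfl | hb
    · simpa using hseg x hx a ha.le
    exact Or.inr (C.add_mem (C.smul_mem ha hx) (C.smul_mem hb hy))

theorem isClosed_insert_zero_cone_of_isCompact {X : Type*} [TopologicalSpace X] [AddCommGroup X]
    [Module ℝ X] [ContinuousSMul ℝ X] [T2Space X] {K : Set X} (hK : IsCompact K)
    (f : X →L[ℝ] ℝ) {r : ℝ} (hr : r < 0) (hf : ∀ k ∈ K, f k ≤ r) :
    IsClosed (insert 0 {x | ∃ t : ℝ, 0 < t ∧ ∃ k ∈ K, x = t • k}) := by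
  refine isClosed_of_closure_subset fun z hz => ?_
  -- Near `z` only the multipliers `t ≤ R` occur, since `f (t • k) ≤ t * r`.
  set R := (1 - f z) / -r
  have hsub : insert 0 {x | ∃ t : ℝ, 0 < t ∧ ∃ k ∈ K, x = t • k} ∩ {x | f z - 1 < f x} ⊆
      (fun p : ℝ × X => p.1 • p.2) '' (Icc 0 R ×ˢ K) ∪ {0} := by
    rintro x ⟨rfl | ⟨t, ht, k, hk, rfl⟩, hx⟩
    · exact Or.inr rfl
    refine Or.inl ⟨(t, k), ⟨⟨ht.le, ?_⟩, hk⟩, rfl⟩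
    rw [le_div_iff₀ (neg_pos.2 hr)]
    simp only [mem_ofPred_eq, map_smul, smul_eq_mul] at hx
    nlinarith [hf k hk]
  have hcl : IsClosed ((fun p : ℝ × X => p.1 • p.2) '' (Icc 0 R ×ˢ K) ∪ {0}) :=
    ((isCompact_Icc.prod hK).image continuous_smul).isClosed.union isClosed_singleton
  have hz' := (isOpen_lt continuous_const f.continuous).inter_closure ⟨sub_one_lt (f z), hz⟩
  rcases closure_minimal ((inter_comm _ _).subset.trans hsub) hcl hz' with
    ⟨⟨t, k⟩, ⟨⟨ht, -⟩, hk⟩, rfl⟩ | rfl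
  · rcases ht.eq_or_lt with rfl | ht
    · simp
    · exact Or.inr ⟨t, ht, k, hk, rfl⟩
  · exact mem_insert _ _

section CompactHull

variable {X : Type*} [TopologicalSpace X] [AddCommGroup X] [Module ℝ X] [ContinuousAdd X]
  [ContinuousSMul ℝ X]

theorem IsCompact.convexJoin {s t : Set X} (hs : IsCompact s) (ht : IsCompact t) :
    IsCompact (_root_.convexJoin ℝ s t) := by
  have : _root_.convexJoin ℝ s t =
      (fun p : X × X × ℝ => (1 - p.2.2) • p.1 + p.2.2 • p.2.1) '' (s ×ˢ t ×ˢ Icc 0 1) := by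
    ext x
    simp [mem_convexJoin, segment_eq_image, and_assoc]
  rw [this]
  exact (hs.prod (ht.prod isCompact_Icc)).image (by fun_prop)

theorem isCompact_convexHull_union {s t : Set X} (hs : IsCompact (convexHull ℝ s))
    (ht : IsCompact (convexHull ℝ t)) : IsCompact (convexHull ℝ (s ∪ t)) := by
  rcases s.eq_empty_or_nonempty with rfl | hs'
  · simpa using ht
  rcases t.eq_empty_or_nonempty with rfl | ht'
  · simpa using hs
  rw [convexHull_union hs' ht']
  exact hs.convexJoin ht

theorem isCompact_convexHull_biUnion_range {K : ℕ → Set X} (hK : ∀ i, IsCompact (K i))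
    (hKconv : ∀ i, Convex ℝ (K i)) (n : ℕ) :
    IsCompact (convexHull ℝ (⋃ i ∈ Finset.range n, K i)) := by
  induction n with
  | zero => simp
  | succ n ih =>
    rw [Finset.range_add_one, Finset.set_biUnion_insert]
    exact isCompact_convexHull_union (by rw [(hKconv n).convexHull_eq]; exact hK n) ih

end CompactHull

section DyadicTail

variable {E : Type*} [NormedAddCommGroup E] [NormedSpace ℝ E]

noncomputable def dyadicTail (u : ℕ → E) (k : ℕ) : E :=
  ∑' j, (1 / 2 : ℝ) ^ (j + 1) • u (j + k)

theorem summable_half_pow_succ_smul [CompleteSpace E] {u : ℕ → E} {M : ℝ}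
    (hu : ∀ j, ‖u j‖ ≤ M) : Summable fun j => (1 / 2 : ℝ) ^ (j + 1) • u j := by
  refine .of_norm_bounded (hasSum_half_pow_succ.summable.mul_right M) fun j => ?_
  rw [norm_smul, Real.norm_of_nonneg (by positivity)]
  exact mul_le_mul_of_nonneg_left (hu j) (by positivity)

theorem dyadicTail_eq_midpoint [CompleteSpace E] {u : ℕ → E} {M : ℝ} (hu : ∀ j, ‖u j‖ ≤ M)
    (k : ℕ) : dyadicTail u k = (1 / 2 : ℝ) • u k + (1 / 2 : ℝ) • dyadicTail u (k + 1) := by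
  have hs := summable_half_pow_succ_smul (u := fun j => u (j + k)) fun j => hu _
  rw [dyadicTail, hs.tsum_eq_zero_add, dyadicTail, ← tsum_const_smul'']
  congr 1
  · simp
  · refine tsum_congr fun j => ?_
    rw [smul_smul, ← pow_succ', add_right_comm, add_assoc j 1 k, add_comm 1 k]

theorem dyadicTail_zero_eq [CompleteSpace E] {u : ℕ → E} {M : ℝ} (hu : ∀ j, ‖u j‖ ≤ M)
    (k : ℕ) : dyadicTail u 0 =
      ∑ j ∈ Finset.range k, (1 / 2 : ℝ) ^ (j + 1) • u j + (1 / 2 : ℝ) ^ k • dyadicTail u k := by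
  induction k with
  | zero => simp
  | succ k ih =>
    rw [ih, dyadicTail_eq_midpoint hu k, Finset.sum_range_succ, smul_add, smul_smul, smul_smul,
      ← pow_succ, add_assoc]

variable {V : ℕ → Set E}

theorem dyadicTail_mem [CompleteSpace E] {u : ℕ → E} {M : ℝ} (hu : ∀ j, ‖u j‖ ≤ M)
    (hV : Antitone V) (hVcl : ∀ k, IsClosed (V k)) (hVconv : ∀ k, Convex ℝ (V k))
    (huV : ∀ j, u j ∈ V j) (k : ℕ) : dyadicTail u k ∈ V k :=
  (hVcl k).mem_of_hasSum_smul (hVconv k) (fun j => by positivity) hasSum_half_pow_succ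
    (fun j => hV (Nat.le_add_left k j) (huV (j + k)))
    (summable_half_pow_succ_smul fun j => hu (j + k)).hasSum

theorem sum_add_half_pow_smul_mem (hV : Antitone V) (hVconv : ∀ k, Convex ℝ (V k))
    {u : ℕ → E} (huV : ∀ j, u j ∈ V j) :
    ∀ k, ∀ x ∈ V k, ∑ j ∈ Finset.range k, (1 / 2 : ℝ) ^ (j + 1) • u j + (1 / 2 : ℝ) ^ k • x ∈ V 0
  | 0, x, hx => by simpa using hx
  | k + 1, x, hx => by
    have hmid : (1 / 2 : ℝ) • u k + (1 / 2 : ℝ) • x ∈ V k :=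
      hVconv k (huV k) (hV k.le_succ hx) (by norm_num) (by norm_num) (by norm_num)
    convert sum_add_half_pow_smul_mem hV hVconv huV k _ hmid using 1
    rw [Finset.sum_range_succ, smul_add, smul_smul, smul_smul, ← pow_succ, add_assoc]

end DyadicTail

section Simons

variable {E : Type*} [NormedAddCommGroup E] [NormedSpace ℝ E] [CompleteSpace E]

/- Choose greedily `uₖ ∈ V k` nearly minimising `q (Sₖ + 2⁻ᵏ • ·)`, where `q` is the
supremum over `Y` and `Sₖ = ∑_{j<k} 2^{-(j+1)} • uⱼ`. A functional `y` attaining `q` at the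
limit `∑ 2^{-(j+1)} • uⱼ = Sₖ + 2⁻ᵏ • τₖ` then satisfies `y τₖ ≤ y τₖ₊₁ + ρ 2^{-(k+1)}` for the
dyadic tails `τₖ ∈ V k`, so `a ≤ y τ₀ ≤ y τₘ + ρ ≤ c + ρ`. -/
theorem simons_inequality_of_antitone {V : ℕ → Set E} (hV : Antitone V)
    (hVcl : ∀ k, IsClosed (V k)) (hVconv : ∀ k, Convex ℝ (V k)) (hVne : ∀ k, (V k).Nonempty)
    (hVbdd : Bornology.IsBounded (V 0)) {Y : Set (StrongDual ℝ E)} {a c : ℝ}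
    (hatt : ∀ z ∈ V 0, ∃ y ∈ Y, a ≤ y z ∧ ∀ y' ∈ Y, y' z ≤ y z)
    (hev : ∀ y ∈ Y, ∃ m, ∀ z ∈ V m, y z ≤ c) : a ≤ c := by
  refine le_of_forall_pos_le_add fun ρ hρ => ?_
  obtain ⟨M, hM⟩ := hVbdd.exists_norm_le
  -- `q z` is the maximum of `y z` over `Y` when `z ∈ V 0`; the `max` keeps `q` bounded below.
  set q : E → ℝ := fun z => max a (sSup ((fun y : StrongDual ℝ E => y z) '' Y))
  have hq : ∀ z ∈ V 0, (∀ y ∈ Y, y z ≤ q z) ∧ ∃ y ∈ Y, a ≤ y z ∧ q z = y z := by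
    intro z hz
    obtain ⟨y, hy, hay, hmax⟩ := hatt z hz
    have hsup : sSup ((fun y : StrongDual ℝ E => y z) '' Y) = y z :=
      IsGreatest.csSup_eq ⟨mem_image_of_mem _ hy, forall_mem_image.2 hmax⟩
    have hqz : q z = y z := by simp only [q, hsup, max_eq_right hay]
    exact ⟨fun y' hy' => hqz ▸ hmax y' hy', y, hy, hay, hqz⟩
  obtain ⟨u, hu⟩ := exists_seq_forall_partialSum (fun j x => (1 / 2 : ℝ) ^ (j + 1) • x)
    (fun k S x => x ∈ V k ∧ ∀ τ ∈ V k,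
      q (S + (1 / 2 : ℝ) ^ k • x) ≤
        q (S + (1 / 2 : ℝ) ^ k • τ) + (1 / 2) ^ k * (ρ * (1 / 2) ^ (k + 1)))
    fun k S => (hVne k).exists_le_add_of_bddBelow
      ⟨a, forall_mem_image.2 fun τ _ => le_max_left _ _⟩ (by positivity)
  have huV : ∀ k, u k ∈ V k := fun k => (hu k).1
  have huM : ∀ j, ‖u j‖ ≤ M := fun j => hM _ (hV (Nat.zero_le j) (huV j))
  have hτV := dyadicTail_mem huM hV hVcl hVconv huV
  obtain ⟨y, hy, hay, hqy⟩ := (hq _ (hτV 0)).2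
  have hstep : ∀ k, y (dyadicTail u k) ≤ y (dyadicTail u (k + 1)) + ρ * (1 / 2) ^ (k + 1) := by
    intro k
    have hle := (hq _ (sum_add_half_pow_smul_mem hV hVconv huV k _ (huV k))).1 y hy
    have hsel := (hu k).2 _ (hτV k)
    rw [← dyadicTail_zero_eq huM k, hqy] at hsel
    have hsplit := congrArg y (dyadicTail_zero_eq huM k)
    have hmid := congrArg y (dyadicTail_eq_midpoint huM k)
    simp only [map_add, map_smul, smul_eq_mul] at hle hsplit hmid
    have hk : (1 / 2 : ℝ) ^ k * y (u k) ≤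
        (1 / 2) ^ k * (y (dyadicTail u k) + ρ * (1 / 2) ^ (k + 1)) := by
      linarith
    linarith [le_of_mul_le_mul_left hk (by positivity)]
  obtain ⟨m, hm⟩ := hev y hy
  linarith [le_add_of_forall_le_succ_add hρ.le hstep m, hm _ (hτV m)]

theorem simons_inequality {v : ℕ → E} (hv : Bornology.IsBounded (range v))
    {Y : Set (StrongDual ℝ E)} {a c : ℝ}
    (hatt : ∀ z ∈ closure (convexHull ℝ (range v)), ∃ y ∈ Y, a ≤ y z ∧ ∀ y' ∈ Y, y' z ≤ y z)
    (hev : ∀ y ∈ Y, ∀ᶠ n in atTop, y (v n) ≤ c) : a ≤ c := by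
  refine simons_inequality_of_antitone (V := fun k => closure (convexHull ℝ (v '' Ici k)))
    (fun k l hkl => closure_mono (convexHull_mono (image_mono (Ici_subset_Ici.2 hkl))))
    (fun k => isClosed_closure) (fun k => (convex_convexHull ℝ _).closure)
    (fun k => ((nonempty_Ici.image v).convexHull).closure)
    (isBounded_convexHull.2 (hv.subset (image_subset_range _ _))).closure
    (by simpa using hatt) fun y hy => ?_
  obtain ⟨m, hm⟩ := eventually_atTop.1 (hev y hy)
  exact ⟨m, fun z hz => y.apply_le_of_mem_closure_convexHull (forall_mem_image.2 hm) hz⟩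

end Simons

section WeakStar

open StrongDual

variable {E : Type*} [NormedAddCommGroup E] [NormedSpace ℝ E]

instance : LocallyConvexSpace ℝ (WeakDual ℝ E) :=
  WeakBilin.locallyConvexSpace

theorem StrongDual.exists_apply_lt_of_notMem {S : Set (StrongDual ℝ E)} (hS : Convex ℝ S)
    (hScl : IsClosed (toWeakDual '' S)) {w : StrongDual ℝ E} (hw : w ∉ S) :
    ∃ x : E, ∃ u : ℝ, (∀ s ∈ S, s x < u) ∧ u < w x := by
  have hw' : toWeakDual w ∉ toWeakDual '' S := by
    rintro ⟨s, hs, h⟩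
    exact hw (toWeakDual.injective h ▸ hs)
  obtain ⟨f, u, hfS, hfw⟩ := geometric_hahn_banach_closed_point
    (hS.linear_image (toWeakDual : StrongDual ℝ E ≃ₗ[ℝ] WeakDual ℝ E).toLinearMap) hScl hw'
  obtain ⟨x, rfl⟩ := LinearMap.dualEmbedding_surjective (topDualPairing ℝ E) f
  exact ⟨x, u, fun s hs => hfS _ (mem_image_of_mem _ hs), hfw⟩

theorem exists_forall_apply_le_neg {D : Set (StrongDual ℝ E)}
    (hDcpt : IsCompact (toWeakDual '' D)) (hDconv : Convex ℝ D) (hD0 : (0 : StrongDual ℝ E) ∉ D) :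
    ∃ e : E, ∃ r < 0, ∀ d ∈ D, d e ≤ r := by
  obtain ⟨e, u, hD, hu⟩ := StrongDual.exists_apply_lt_of_notMem hDconv hDcpt.isClosed hD0
  exact ⟨e, u, by simpa using hu, fun d hd => (hD d hd).le⟩

theorem exists_norm_eq_one_of_forall_add_apply_lt {P Λ : Set (StrongDual ℝ E)}
    {w : StrongDual ℝ E} {r : ℝ} {x₀ : E} (hPne : P.Nonempty) (hΛ0 : 0 ∈ Λ)
    (hΛsmul : ∀ t : ℝ, 0 < t → ∀ l ∈ Λ, t • l ∈ Λ) (hr : 0 ≤ r)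
    (h : ∀ p ∈ P, ∀ g ∈ Metric.closedBall (0 : StrongDual ℝ E) r, ∀ l ∈ Λ,
      p x₀ + g x₀ + l x₀ < w x₀) :
    ∃ x : E, ‖x‖ = 1 ∧ (∀ p ∈ P, p x + r ≤ w x) ∧ ∀ l ∈ Λ, l x ≤ 0 := by
  obtain ⟨p₀, hp₀⟩ := hPne
  have hp₀w : p₀ x₀ < w x₀ := by
    simpa using h p₀ hp₀ 0 (Metric.mem_closedBall_self hr) 0 hΛ0
  have hx₀ : 0 < ‖x₀‖ := norm_pos_iff.2 fun h₀ => by simp [h₀] at hp₀w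
  obtain ⟨g, hg, hgx⟩ := exists_dual_vector ℝ x₀ hx₀.ne'
  refine ⟨‖x₀‖⁻¹ • x₀, by simp [norm_smul, hx₀.ne'], fun p hp => ?_, fun l hl => ?_⟩
  · have hpr : p x₀ + r * ‖x₀‖ < w x₀ := by
      simpa [hgx] using h p hp (r • g) (by simp [norm_smul, hg, abs_of_nonneg hr]) 0 hΛ0
    simp only [map_smul, smul_eq_mul]
    rw [← sub_nonneg]
    have : ‖x₀‖⁻¹ * w x₀ - (‖x₀‖⁻¹ * p x₀ + r) = ‖x₀‖⁻¹ * (w x₀ - (p x₀ + r * ‖x₀‖)) := by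
      field_simp
    rw [this]
    exact mul_nonneg (inv_nonneg.2 hx₀.le) (by linarith)
  · -- `Λ` is a cone, so `l x₀ > 0` would make `p₀ + t • l` exceed `w` at `x₀` for large `t`.
    have hlx : l x₀ ≤ 0 := by
      by_contra! hl₀
      set t := (w x₀ - p₀ x₀) / l x₀
      have ht : 0 < t := div_pos (by linarith) hl₀
      have := h p₀ hp₀ 0 (Metric.mem_closedBall_self hr) (t • l) (hΛsmul t ht l hl)
      simp only [zero_apply, add_zero, smul_apply, smul_eq_mul, t, div_mul_cancel₀ _ hl₀.ne']
        at this
      linarith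
    simpa [map_smul] using mul_nonpos_of_nonneg_of_nonpos (inv_nonneg.2 hx₀.le) hlx

theorem exists_norm_eq_one_separating {P Λ : Set (StrongDual ℝ E)} {w : StrongDual ℝ E} {r : ℝ}
    (hP : IsCompact (toWeakDual '' P)) (hPconv : Convex ℝ P) (hPne : P.Nonempty)
    (hΛ : IsClosed (toWeakDual '' Λ)) (hΛconv : Convex ℝ Λ) (hΛ0 : 0 ∈ Λ)
    (hΛsmul : ∀ t : ℝ, 0 < t → ∀ l ∈ Λ, t • l ∈ Λ) (hr : 0 ≤ r)
    (hdist : ∀ p ∈ P, ∀ l ∈ Λ, r < ‖w - (p + l)‖) :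
    ∃ x : E, ‖x‖ = 1 ∧ (∀ p ∈ P, p x + r ≤ w x) ∧ ∀ l ∈ Λ, l x ≤ 0 := by
  have hball : IsCompact (toWeakDual '' Metric.closedBall (0 : StrongDual ℝ E) r) := by
    rw [LinearEquiv.image_eq_preimage_symm]
    exact WeakDual.isCompact_closedBall 0 r
  have hcl : IsClosed (toWeakDual '' (P + Metric.closedBall 0 r + Λ)) := by
    rw [image_add, image_add]
    exact hΛ.add_left_of_isCompact (hP.add hball)
  have hw : w ∉ P + Metric.closedBall 0 r + Λ := by
    rintro ⟨_, ⟨p, hp, g, hg, rfl⟩, l, hl, rfl⟩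
    have := hdist p hp l hl
    simp only [add_right_comm p g l, add_sub_cancel_left] at this
    exact (mem_closedBall_zero_iff.1 hg).not_gt this
  obtain ⟨x₀, u, hlt, hu⟩ := StrongDual.exists_apply_lt_of_notMem
    ((hPconv.add (convex_closedBall 0 r)).add hΛconv) hcl hw
  exact exists_norm_eq_one_of_forall_add_apply_lt hPne hΛ0 hΛsmul hr fun p hp g hg l hl =>
    (hlt _ (add_mem_add (add_mem_add hp hg) hl)).trans hu

theorem isCompact_image_toWeakDual_convexHull_biUnion_range {K : ℕ → Set (StrongDual ℝ E)}
    (hK : ∀ i, IsCompact (toWeakDual '' K i)) (hKconv : ∀ i, Convex ℝ (K i)) (n : ℕ) :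
    IsCompact (toWeakDual '' convexHull ℝ (⋃ i ∈ Finset.range n, K i)) := by
  rw [← LinearEquiv.coe_toLinearMap, LinearMap.image_convexHull, image_iUnion₂]
  exact isCompact_convexHull_biUnion_range hK
    (fun i => (hKconv i).linear_image
      (toWeakDual : StrongDual ℝ E ≃ₗ[ℝ] WeakDual ℝ E).toLinearMap) n

theorem LambdaD_eq_insert_hull {D : Set (StrongDual ℝ E)} (hD : Convex ℝ D) :
    LambdaD D = insert 0 (ConvexCone.hull ℝ D : Set (StrongDual ℝ E)) := by
  ext z
  simp [LambdaD, ConvexCone.mem_hull_of_convex hD, mem_smul_set, eq_comm]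

theorem convex_LambdaD {D : Set (StrongDual ℝ E)} (hD : Convex ℝ D) : Convex ℝ (LambdaD D) :=
  LambdaD_eq_insert_hull hD ▸ (ConvexCone.hull ℝ D).convex_insert_zero

theorem zero_mem_LambdaD (D : Set (StrongDual ℝ E)) : 0 ∈ LambdaD D :=
  Or.inl rfl

theorem subset_LambdaD (D : Set (StrongDual ℝ E)) : D ⊆ LambdaD D :=
  fun d hd => Or.inr ⟨1, one_pos, d, hd, (one_smul ℝ d).symm⟩

theorem smul_mem_LambdaD {D : Set (StrongDual ℝ E)} {t : ℝ} (ht : 0 < t) {l : StrongDual ℝ E}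
    (hl : l ∈ LambdaD D) : t • l ∈ LambdaD D := by
  rcases hl with rfl | ⟨s, hs, d, hd, rfl⟩
  · simpa using zero_mem_LambdaD D
  · exact Or.inr ⟨t * s, mul_pos ht hs, d, hd, smul_smul t s d⟩

theorem isClosed_image_toWeakDual_LambdaD {D : Set (StrongDual ℝ E)}
    (hDcpt : IsCompact (toWeakDual '' D)) {e : E} {r : ℝ} (hr : r < 0)
    (he : ∀ d ∈ D, d e ≤ r) : IsClosed (toWeakDual '' LambdaD D) := by
  have := isClosed_insert_zero_cone_of_isCompact (X := WeakDual ℝ E) hDcpt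
    (WeakBilin.eval (topDualPairing ℝ E) e) hr (forall_mem_image.2 he)
  convert this using 1
  ext z
  simp [LambdaD, and_assoc, @eq_comm _ z]

theorem mem_wStarClosedConvexHull_iff {B : Set (StrongDual ℝ E)} {w : StrongDual ℝ E} :
    w ∈ wStarClosedConvexHull B ↔ toWeakDual w ∈ closure (convexHull ℝ (toWeakDual '' B)) := by
  have h := (toWeakDual : StrongDual ℝ E ≃ₗ[ℝ] WeakDual ℝ E).toLinearMap.image_convexHull B
  rw [LinearEquiv.coe_coe] at h
  rw [wStarClosedConvexHull, mem_preimage, h]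

theorem apply_le_of_mem_wStarClosedConvexHull {B : Set (StrongDual ℝ E)} {w : StrongDual ℝ E}
    (hw : w ∈ wStarClosedConvexHull B) {x : E} {c : ℝ} (h : ∀ b ∈ B, b x ≤ c) : w x ≤ c :=
  (WeakBilin.eval (topDualPairing ℝ E) x).apply_le_of_mem_closure_convexHull
    (forall_mem_image.2 h) (mem_wStarClosedConvexHull_iff.1 hw)

theorem nonempty_of_mem_wStarClosedConvexHull {B : Set (StrongDual ℝ E)} {w : StrongDual ℝ E}
    (hw : w ∈ wStarClosedConvexHull B) : B.Nonempty := by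
  rw [nonempty_iff_ne_empty]
  rintro rfl
  simp [wStarClosedConvexHull] at hw

theorem nonneg_of_mem_wStarClosedConvexHull [CompleteSpace E] {B : Set (StrongDual ℝ E)}
    {w : StrongDual ℝ E} (hw : w ∈ wStarClosedConvexHull B) {v : ℕ → E}
    (hv : Bornology.IsBounded (range v))
    (hatt : ∀ z ∈ closure (convexHull ℝ (range v)), ∃ b ∈ B, ∀ b' ∈ B, b' z ≤ b z) {c : ℝ}
    (hev : ∀ b ∈ B, ∀ᶠ n in atTop, b (v n) - w (v n) ≤ c) : 0 ≤ c := by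
  refine simons_inequality hv (Y := (· - w) '' B) (fun z hz => ?_) (forall_mem_image.2 hev)
  obtain ⟨b, hb, hmax⟩ := hatt z hz
  exact ⟨b - w, mem_image_of_mem _ hb,
    sub_nonneg.2 (apply_le_of_mem_wStarClosedConvexHull hw hmax),
    forall_mem_image.2 fun b' hb' => sub_le_sub_right (hmax b' hb') _⟩

theorem exists_forall_apply_le_of_forall_apply_le_neg {D B : Set (StrongDual ℝ E)}
    (hbd : ∀ x ∈ LD D, ∃ b ∈ B, ∀ z ∈ B, z x ≤ b x) (hB : B.Nonempty) {x : E} {r : ℝ}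
    (hr : r < 0) (hx : ∀ d ∈ D, d x ≤ r) : ∃ b ∈ B, ∀ z ∈ B, z x ≤ b x := by
  rcases eq_or_ne x 0 with rfl | hx0
  · obtain ⟨b, hb⟩ := hB
    exact ⟨b, hb, fun z _ => by simp⟩
  exact hbd x (D.eq_empty_or_nonempty.imp (fun hD => ⟨hD, hx0⟩) fun hD => ⟨hD, r, hr, hx⟩)

theorem not_forall_eventually_add_le_of_mem_wStarClosedConvexHull [CompleteSpace E]
    {D B : Set (StrongDual ℝ E)} {w : StrongDual ℝ E} (hw : w ∈ wStarClosedConvexHull B)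
    (hbd : ∀ x ∈ LD D, ∃ b ∈ B, ∀ z ∈ B, z x ≤ b x) {e : E} {r : ℝ} (hr : r < 0)
    (he : ∀ d ∈ D, d e ≤ r) {x : ℕ → E} (hx : ∀ n, ‖x n‖ ≤ 1)
    (hxD : ∀ n, ∀ d ∈ D, d (x n) ≤ 0) {ε : ℝ} (hε : 0 < ε) :
    ¬∀ b ∈ B, ∀ᶠ n in atTop, b (x n) + ε ≤ w (x n) := by
  intro hxB
  have hB := nonempty_of_mem_wStarClosedConvexHull hw
  obtain ⟨b₁, -, hb₁⟩ := exists_forall_apply_le_of_forall_apply_le_neg hbd hB hr he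
  -- Shifting by `θ • e` moves the whole sequence uniformly into `L_D` at a cost `≤ ε / 2`.
  set θ := ε / 2 / max (b₁ e - w e) 1
  have hθ : 0 < θ := by positivity
  have hθe : θ * (b₁ e - w e) ≤ ε / 2 := by
    calc θ * (b₁ e - w e) ≤ θ * max (b₁ e - w e) 1 := by gcongr; exact le_max_left _ _
      _ = ε / 2 := div_mul_cancel₀ _ (by positivity)
  have hvD (n : ℕ) (d) (hd : d ∈ D) : d (x n + θ • e) ≤ θ * r := by
    simpa [map_smul] using add_le_add (hxD n d hd) (mul_le_mul_of_nonneg_left (he d hd) hθ.le)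
  refine absurd (nonneg_of_mem_wStarClosedConvexHull hw (v := fun n => x n + θ • e)
    (c := -(ε / 2)) ?_ (fun z hz => ?_) fun b hb => ?_) (by linarith)
  · refine isBounded_iff_forall_norm_le.2 ⟨1 + θ * ‖e‖, forall_mem_range.2 fun n => ?_⟩
    calc ‖x n + θ • e‖ ≤ ‖x n‖ + ‖θ • e‖ := norm_add_le _ _
      _ ≤ 1 + θ * ‖e‖ := by rw [norm_smul, Real.norm_of_nonneg hθ.le]; linarith [hx n]
  · exact exists_forall_apply_le_of_forall_apply_le_neg hbd hB (mul_neg_of_pos_of_neg hθ hr)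
      fun d hd => d.apply_le_of_mem_closure_convexHull (forall_mem_range.2 fun n => hvD n d hd) hz
  · filter_upwards [hxB b hb] with n hn
    have hbe := mul_le_mul_of_nonneg_left (hb₁ b hb) hθ.le
    simp only [map_add, map_smul, smul_eq_mul]
    linarith

end WeakStar

theorem one_side_I_generation_general
    {E : Type*} [NormedAddCommGroup E] [NormedSpace ℝ E] [CompleteSpace E]
    (D : Set (StrongDual ℝ E))
    (hDcpt : IsCompact (StrongDual.toWeakDual '' D)) (hDconv : Convex ℝ D)
    (hD0 : (0 : StrongDual ℝ E) ∉ D)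
    (B : Set (StrongDual ℝ E))
    (hbd : ∀ x ∈ LD D, ∃ b ∈ B, ∀ z ∈ B, z x ≤ b x)
    (K : ℕ → Set (StrongDual ℝ E))
    (hKcpt : ∀ n, IsCompact (StrongDual.toWeakDual '' K n))
    (hKconv : ∀ n, Convex ℝ (K n))
    (hcover : B ⊆ ⋃ n, K n) :
    wStarClosedConvexHull B ⊆ closure (convexHull ℝ (⋃ n, K n) + LambdaD D) := by
  intro w hw
  by_contra hwC
  obtain ⟨ε, hε, hdist⟩ : ∃ ε > 0,
      ∀ p ∈ convexHull ℝ (⋃ n, K n), ∀ l ∈ LambdaD D, ε < ‖w - (p + l)‖ := by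
    obtain ⟨ε, hε, h⟩ : ∃ ε > 0, ∀ q ∈ convexHull ℝ (⋃ n, K n) + LambdaD D, ε ≤ dist w q := by
      simpa [Metric.mem_closure_iff] using hwC
    exact ⟨ε / 2, half_pos hε, fun p hp l hl => by
      linarith [h _ (add_mem_add hp hl), dist_eq_norm w (p + l)]⟩
  obtain ⟨b₀, hb₀⟩ := nonempty_of_mem_wStarClosedConvexHull hw
  obtain ⟨m₀, hm₀⟩ := mem_iUnion.1 (hcover hb₀)
  obtain ⟨e, r, hr, he⟩ := exists_forall_apply_le_neg hDcpt hDconv hD0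
  have hsep (n : ℕ) : ∃ x : E, ‖x‖ = 1 ∧
      (∀ p ∈ convexHull ℝ (⋃ i ∈ Finset.range (n + m₀ + 1), K i), p x + ε ≤ w x) ∧
      ∀ l ∈ LambdaD D, l x ≤ 0 :=
    exists_norm_eq_one_separating
      (isCompact_image_toWeakDual_convexHull_biUnion_range hKcpt hKconv _) (convex_convexHull ℝ _)
      ⟨b₀, subset_convexHull ℝ _ (mem_biUnion (Finset.mem_range.2 (by omega)) hm₀)⟩
      (isClosed_image_toWeakDual_LambdaD hDcpt hr he) (convex_LambdaD hDconv)
      (zero_mem_LambdaD D) (fun _ ht _ hl => smul_mem_LambdaD ht hl) hε.le fun p hp =>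
      hdist p (convexHull_mono (iUnion₂_subset fun i _ => subset_iUnion K i) hp)
  choose x hx1 hxP hxΛ using hsep
  refine not_forall_eventually_add_le_of_mem_wStarClosedConvexHull hw hbd hr he
    (fun n => (hx1 n).le) (fun n d hd => hxΛ n d (subset_LambdaD D hd)) hε fun b hb => ?_
  obtain ⟨m, hm⟩ := mem_iUnion.1 (hcover hb)
  filter_upwards [eventually_ge_atTop m] with n hn
  exact hxP n b (subset_convexHull ℝ _ (mem_biUnion (Finset.mem_range.2 (by omega)) hm))

/-- One-side (I)-generation: let `D ⊆ E*` be weak*-compact convex with `0 ∉ D` and let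
`B ⊆ E*` be such that every `x ∈ L_D` attains its supremum over `B` at a point of `B`.
If `B ⊆ ⋃ₙ Kₙ` for weak*-compact convex subsets `Kₙ` of the weak*-closed convex hull of
`B`, then this hull is contained in the norm closure of `co(⋃ₙ Kₙ) + Λ_D`. -/
theorem one_side_I_generation
    {E : Type*} [NormedAddCommGroup E] [NormedSpace ℝ E] [CompleteSpace E]
    (D : Set (StrongDual ℝ E))
    (hDcpt : IsCompact (StrongDual.toWeakDual '' D)) (hDconv : Convex ℝ D)
    (hD0 : (0 : StrongDual ℝ E) ∉ D)
    (B : Set (StrongDual ℝ E))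
    (hbd : ∀ x ∈ LD D, ∃ b ∈ B, ∀ z ∈ B, z x ≤ b x)
    (K : ℕ → Set (StrongDual ℝ E))
    (hKcpt : ∀ n, IsCompact (StrongDual.toWeakDual '' K n))
    (hKconv : ∀ n, Convex ℝ (K n))
    (hKsub : ∀ n, K n ⊆ wStarClosedConvexHull B)
    (hcover : B ⊆ ⋃ n, K n) :
    wStarClosedConvexHull B ⊆ closure (convexHull ℝ (⋃ n, K n) + LambdaD D) :=
  one_side_I_generation_general D hDcpt hDconv hD0 B hbd K hKcpt hKconv hcover
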